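/- arXiv:1508.06039 — 2 statements merged into one kernel-verified Lean document; each statement's English description precedes it below -/
import Mathlib

section
/- The limit as n → ∞ of (∑_{i=1}^{n} C(n,i) · 4^{C(n−i,2)} · 2^{C(i,2)}) / 4^{C(n,2)} equals 0. -/
open Filter

lemma two_mul_choose_two (k : ℕ) : 2 * k.choose 2 = k * (k - 1) := by
  rcases k with _ | k
  · simp
  · rw [Nat.choose_two_right, Nat.succ_sub_one, Nat.mul_div_cancel']
    rw [Nat.mul_comm]
    exact (Nat.even_mul_succ_self k).two_dvd

lemma choose_le_two_pow' (n i : ℕ) : n.choose i ≤ 2 ^ n := by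
  rcases le_or_gt i n with h | h
  · calc n.choose i ≤ ∑ m ∈ Finset.range (n+1), n.choose m :=
        Finset.single_le_sum (fun _ _ => Nat.zero_le _) (Finset.mem_range.mpr (by omega))
      _ = 2 ^ n := Nat.sum_range_choose n
  · rw [Nat.choose_eq_zero_of_lt h]; exact Nat.zero_le _

lemma exp_ineq (n i : ℕ) (h4 : 4 ≤ n) (h1 : 1 ≤ i) (hin : i ≤ n) :
    2 * ((n - i).choose 2) + i.choose 2 + 2 * (n - 1) ≤ 2 * n.choose 2 := by
  have hp : 2 * ((n - i) * (n - i - 1)) + i * (i - 1) + 2 * (2 * (n - 1))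
      ≤ 2 * (n * (n - 1)) := by
    rcases Nat.exists_eq_add_of_le h1 with ⟨i', rfl⟩
    rcases Nat.eq_zero_or_pos (n - (1 + i')) with hj0 | hj1
    · have hni : n = 1 + i' := by omega
      subst hni
      simp only [Nat.sub_self, Nat.zero_mul, Nat.mul_zero, Nat.add_sub_cancel_left,
        Nat.zero_add, Nat.mul_zero]
      nlinarith [h4]
    · have hn : n = 2 + i' + (n - (1 + i') - 1) := by omega
      set j' := n - (1 + i') - 1 with hj'
      rw [hn]
      have e1 : 2 + i' + j' - (1 + i') = 1 + j' := by omega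
      have e2 : 2 + i' + j' - 1 = 1 + i' + j' := by omega
      have e4 : 1 + i' - 1 = i' := by omega
      rw [e1, e2, e4]
      nlinarith [Nat.zero_le i', Nat.zero_le j']
  linarith [two_mul_choose_two (n - i), two_mul_choose_two i, two_mul_choose_two n, hp]

/-- `(∑_{i=1}^n C(n,i)·4^{C(n−i,2)}·2^{C(i,2)}) / 4^{C(n,2)} → 0` as `n → ∞`. -/
theorem stmt_11 :
    Tendsto
      (fun n : ℕ =>
        (∑ i ∈ Finset.Icc 1 n,
            (n.choose i : ℝ) * 4 ^ ((n - i).choose 2) * 2 ^ (i.choose 2)) /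
          4 ^ (n.choose 2))
      atTop (nhds 0) := by
  have hlim : Tendsto (fun n : ℕ => 4 * (n * (1/2 : ℝ) ^ n)) atTop (nhds 0) := by
    have := tendsto_self_mul_const_pow_of_lt_one (r := (1/2 : ℝ)) (by norm_num) (by norm_num)
    simpa using this.const_mul 4
  apply tendsto_of_tendsto_of_tendsto_of_le_of_le' tendsto_const_nhds hlim
  · filter_upwards with n
    apply div_nonneg _ (by positivity)
    exact Finset.sum_nonneg fun i _ => by positivity
  · filter_upwards [eventually_ge_atTop 4] with n hn
    rw [div_le_iff₀ (by positivity)]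
    have hcard : ((Finset.Icc 1 n).card : ℝ) = n := by
      rw [Nat.card_Icc]; simp
    calc (∑ i ∈ Finset.Icc 1 n,
          (n.choose i : ℝ) * 4 ^ ((n - i).choose 2) * 2 ^ (i.choose 2))
        ≤ ∑ i ∈ Finset.Icc 1 n,
            (2:ℝ) ^ n * (4 ^ (n.choose 2) * (1/2:ℝ) ^ (2 * (n - 1))) := by
          apply Finset.sum_le_sum
          intro i hi
          simp only [Finset.mem_Icc] at hi
          have h4 : (4:ℝ) = 2 ^ 2 := by norm_num
          have hb' : (4:ℝ) ^ ((n - i).choose 2) * 2 ^ (i.choose 2)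
              ≤ 4 ^ (n.choose 2) * (1/2:ℝ) ^ (2 * (n - 1)) := by
            rw [h4, ← pow_mul, ← pow_mul, ← pow_add, one_div, inv_pow,
              ← div_eq_mul_inv, le_div_iff₀ (by positivity), ← pow_add]
            apply pow_le_pow_right₀ (by norm_num)
            have := exp_ineq n i hn hi.1 hi.2
            omega
          have hc : ((n.choose i : ℝ)) ≤ 2 ^ n := by
            exact_mod_cast choose_le_two_pow' n i
          calc (n.choose i : ℝ) * 4 ^ ((n - i).choose 2) * 2 ^ (i.choose 2)
              = (n.choose i : ℝ) * (4 ^ ((n - i).choose 2) * 2 ^ (i.choose 2)) := by ring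
            _ ≤ 2 ^ n * (4 ^ (n.choose 2) * (1/2:ℝ) ^ (2 * (n - 1))) :=
                mul_le_mul hc hb' (by positivity) (by positivity)
      _ = n * ((2:ℝ) ^ n * (4 ^ (n.choose 2) * (1/2:ℝ) ^ (2 * (n - 1)))) := by
          rw [Finset.sum_const, nsmul_eq_mul, hcard]
      _ = 4 * ((n:ℝ) * (1/2 : ℝ) ^ n) * 4 ^ (n.choose 2) := by
          obtain ⟨m, rfl⟩ : ∃ m, n = m + 1 := ⟨n - 1, by omega⟩
          have hkey : (2:ℝ) ^ (m+1) * (1/2:ℝ) ^ (2 * (m + 1 - 1)) = 4 * (1/2:ℝ) ^ (m+1) := by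
            simp only [Nat.add_sub_cancel]
            calc (2:ℝ) ^ (m+1) * (1/2:ℝ) ^ (2 * m)
                = 2 * ((2 * (1/2:ℝ)^2) ^ m) := by rw [pow_succ, pow_mul, mul_pow]; ring
              _ = 2 * (1/2:ℝ) ^ m := by norm_num
              _ = 4 * (1/2:ℝ) ^ (m+1) := by rw [pow_succ]; ring
          calc ((m+1:ℕ):ℝ) * ((2:ℝ) ^ (m+1) * (4 ^ ((m+1).choose 2) * (1/2:ℝ) ^ (2 * (m+1-1))))
              = ((m+1:ℕ):ℝ) * ((2:ℝ) ^ (m+1) * (1/2:ℝ) ^ (2 * (m+1-1))) * 4 ^ ((m+1).choose 2) := by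
                ring
            _ = 4 * (((m+1:ℕ):ℝ) * (1/2 : ℝ) ^ (m+1)) * 4 ^ ((m+1).choose 2) := by
                rw [hkey]; ring
end

section
/- Let L be a first-order language, M an infinite L-structure, and X ⊆ M a cofinite subset which is an indiscernible set over M ∖ X, i.e. for every n, any two n-tuples of pairwise distinct elements of X realize the same complete type over M ∖ X. Then for every L-formula φ(x, ȳ) and every tuple of parameters ā from M, the set φ(M, ā) = {b ∈ M : M ⊨ φ(b, ā)} is finite or cofinite in M. -/
open FirstOrder

/-- If `X` is a cofinite subset of an infinite structure `M` which is an
indiscernible set over `M ∖ X`, then every definable set (in one variable, with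
parameters from `M`) is finite or cofinite. -/
theorem stmt_17 {L : Language} {M : Type*} [L.Structure M] [Infinite M]
    (X : Set M) (hcofin : Xᶜ.Finite)
    (hind : ∀ (n k : ℕ) (ψ : L.Formula (Fin n ⊕ Fin k))
      (a b : Fin n → M) (c : Fin k → M),
      Function.Injective a → Function.Injective b →
      Set.range a ⊆ X → Set.range b ⊆ X → Set.range c ⊆ Xᶜ →
      (ψ.Realize (Sum.elim a c) ↔ ψ.Realize (Sum.elim b c))) :
    ∀ (k : ℕ) (φ : L.Formula (Fin (k + 1))) (c : Fin k → M),
      {b : M | φ.Realize (Fin.cons b c)}.Finite ∨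
        {b : M | φ.Realize (Fin.cons b c)}ᶜ.Finite := by
  intro k φ c
  classical
  -- Enumerate the parameters lying in X and in Xᶜ
  have hV : (X ∩ Set.range c).Finite := (Set.finite_range c).inter_of_right X
  have hW : (Xᶜ ∩ Set.range c).Finite := (Set.finite_range c).inter_of_right Xᶜ
  set Vf := hV.toFinset with hVf
  set Wf := hW.toFinset with hWf
  let eV := Vf.equivFin
  let eW := Wf.equivFin
  let d : Fin Vf.card → M := fun i => (eV.symm i : M)
  let e : Fin Wf.card → M := fun i => (eW.symm i : M)
  have hd_inj : Function.Injective d :=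
    fun i j h => eV.symm.injective (Subtype.ext h)
  have hd_range : Set.range d ⊆ X := by
    rintro x ⟨i, rfl⟩
    exact (hV.mem_toFinset.mp (eV.symm i).2).1
  have he_range : Set.range e ⊆ Xᶜ := by
    rintro x ⟨i, rfl⟩
    exact (hW.mem_toFinset.mp (eW.symm i).2).1
  -- the relabeling map
  let r : Fin (k + 1) → (Fin (Vf.card + 1)) ⊕ Fin Wf.card :=
    Fin.cases (Sum.inl 0) (fun i =>
      if h : c i ∈ X then
        Sum.inl (Fin.succ (eV ⟨c i, hV.mem_toFinset.mpr ⟨h, i, rfl⟩⟩))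
      else
        Sum.inr (eW ⟨c i, hW.mem_toFinset.mpr ⟨h, i, rfl⟩⟩))
  have htuple : ∀ b : M, (Sum.elim (Fin.cons b d) e) ∘ r = Fin.cons b c := by
    intro b
    funext i
    refine Fin.cases ?_ (fun j => ?_) i
    · simp [r]
    · simp only [Function.comp_apply, r, Fin.cases_succ, Fin.cons_succ]
      by_cases h : c j ∈ X
      · simp only [dif_pos h, Sum.elim_inl, Fin.cons_succ, d]
        rw [Equiv.symm_apply_apply]
      · simp only [dif_neg h, Sum.elim_inr, e]
        rw [Equiv.symm_apply_apply]
  have hcons_inj : ∀ b : M, b ∉ Set.range c → b ∈ X →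
      Function.Injective (Fin.cons b d : Fin (Vf.card + 1) → M) := by
    intro b hbc _
    rw [Fin.cons_injective_iff]
    refine ⟨?_, hd_inj⟩
    rintro ⟨i, hi⟩
    apply hbc
    exact hi ▸ (hV.mem_toFinset.mp (eV.symm i).2).2
  have hcons_range : ∀ b : M, b ∈ X →
      Set.range (Fin.cons b d : Fin (Vf.card + 1) → M) ⊆ X := by
    intro b hb x hx
    obtain ⟨i, rfl⟩ := hx
    refine Fin.cases ?_ (fun j => ?_) i
    · simpa using hb
    · rw [Fin.cons_succ]; exact hd_range ⟨j, rfl⟩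
  -- key: any two fresh elements of X agree on φ
  have key : ∀ b b' : M, b ∈ X → b' ∈ X → b ∉ Set.range c → b' ∉ Set.range c →
      (φ.Realize (Fin.cons b c) ↔ φ.Realize (Fin.cons b' c)) := by
    intro b b' hb hb' hbc hb'c
    have h1 := hind (Vf.card + 1) Wf.card (φ.relabel r)
      (Fin.cons b d) (Fin.cons b' d) e
      (hcons_inj b hbc hb) (hcons_inj b' hb'c hb')
      (hcons_range b hb) (hcons_range b' hb') he_range
    rwa [Language.Formula.realize_relabel, Language.Formula.realize_relabel,
      htuple b, htuple b'] at h1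
  -- conclude
  have hTc : (Xᶜ ∪ Set.range c).Finite := hcofin.union (Set.finite_range c)
  have hT : (X \ Set.range c).Nonempty := by
    rcases (hTc.infinite_compl).nonempty with ⟨b, hb⟩
    refine ⟨b, ?_⟩
    simp only [Set.mem_compl_iff, Set.mem_union, not_or] at hb
    exact ⟨not_not.mp hb.1, hb.2⟩
  obtain ⟨b₀, hb₀X, hb₀c⟩ := hT
  by_cases h0 : φ.Realize (Fin.cons b₀ c)
  · right
    apply hTc.subset
    intro b hb
    simp only [Set.mem_compl_iff, Set.mem_setOf_eq] at hb
    by_contra hbT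
    simp only [Set.mem_union, Set.mem_compl_iff, not_or, not_not] at hbT
    exact hb ((key b b₀ hbT.1 hb₀X hbT.2 hb₀c).mpr h0)
  · left
    apply hTc.subset
    intro b hb
    simp only [Set.mem_setOf_eq] at hb
    by_contra hbT
    simp only [Set.mem_union, Set.mem_compl_iff, not_or, not_not] at hbT
    exact h0 ((key b b₀ hbT.1 hb₀X hbT.2 hb₀c).mp hb)
end
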